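/- Let e ∈ E(T) and v ∈ U_e. Let T̂ be a subtree of T such that V(T̂) ⊆ D_e, and let c ∈ V(T̂). Let f = (v, u) ∈ S(e, v) be a swap edge for e that minimizes w(f') + d_T(u', c) over all edges f' = (v, u') ∈ S(e, v), and let g = (x, y) be a critical edge for f. Assume that S(e, v, V(T̂)) contains a v-best cut edge for e. If f is not a v-best cut edge for e, then S(e, v, V(T')) contains a v-best cut edge for e, where T' is the (c, y)-tree of T̂. -/

import Mathlib

open SimpleGraph

variable {V : Type*} [Fintype V] [DecidableEq V]

/-- Total weight of a walk: the sum of the weights of its edges. -/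
def pathWeight (w : Sym2 V → ℝ) {G : SimpleGraph V} {x y : V} (p : G.Walk x y) : ℝ :=
  (p.edges.map w).sum

/-- Weighted shortest-path distance in `G` between `x` and `y`
(infimum of the weights of all paths from `x` to `y`);
in a tree this is the weight of the unique path. -/
noncomputable def wDist (G : SimpleGraph V) (w : Sym2 V → ℝ) (x y : V) : ℝ :=
  sInf {r | ∃ p : G.Walk x y, p.IsPath ∧ r = pathWeight w p}

/-- `G` is 2-edge-connected: connected, and still connected after deleting any edge. -/
def TwoEdgeConnected (G : SimpleGraph V) : Prop :=
  G.Connected ∧ ∀ e ∈ G.edgeSet, (G.deleteEdges {e}).Connected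

/-- `U_e`: vertices of the component of `T - e` containing the root. -/
def Ue (T : SimpleGraph V) (root : V) (e : Sym2 V) : Set V :=
  {v | (T.deleteEdges {e}).Reachable root v}

/-- `D_e`: vertices of the component of `T - e` not containing the root. -/
def De (T : SimpleGraph V) (root : V) (e : Sym2 V) : Set V :=
  {v | ¬ (T.deleteEdges {e}).Reachable root v}

/-- `VSwap G T root e v u` says that `(v, u)`, with `v ∈ U_e` and `u ∈ D_e`,
is (the canonically oriented representation of) a swap edge for `e`:
an edge of `G`, different from `e`, whose endpoints lie in the two
different components of `T - e`. -/
def VSwap (G T : SimpleGraph V) (root : V) (e : Sym2 V) (v u : V) : Prop :=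
  G.Adj v u ∧ s(v, u) ≠ e ∧ v ∈ Ue T root e ∧ u ∈ De T root e

/-- `φ(f, g)` for the swap edge `f = (v, u)` (with `v ∈ U_e`, `u ∈ D_e`) and the swap
edge `g = (x, y)` (with `x ∈ U_e`, `y ∈ D_e`):
`(d_T(x, v) + w(f) + d_T(u, y)) / w(g)`. -/
noncomputable def phi (T : SimpleGraph V) (w : Sym2 V → ℝ) (v u x y : V) : ℝ :=
  (wDist T w x v + w (s(v, u)) + wDist T w u y) / w (s(x, y))

/-- `φ_e(f) = max_{g ∈ S(e)} φ(f, g)` for the swap edge `f = (v, u)`. -/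
noncomputable def phiMax (G T : SimpleGraph V) (w : Sym2 V → ℝ) (root : V) (e : Sym2 V)
    (v u : V) : ℝ :=
  sSup {r | ∃ x y, VSwap G T root e x y ∧ r = phi T w v u x y}

/-- The swap tree `T_{e/f}`: delete `e` from `T` and insert `f`. -/
def swapTree (T : SimpleGraph V) (e f : Sym2 V) : SimpleGraph V :=
  fromEdgeSet ((T.edgeSet \ {e}) ∪ {f})

/-- The stretch factor `σ_H(T')` of `T'` w.r.t. `H`:
the maximum over pairs of distinct vertices of `d_{T'}(x,y) / d_H(x,y)`. -/
noncomputable def stretch (H T' : SimpleGraph V) (w : Sym2 V → ℝ) : ℝ :=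
  sSup {r | ∃ x y : V, x ≠ y ∧ r = wDist T' w x y / wDist H w x y}

/-- `x` and `y` are joined by a walk of `T` whose support stays inside `A`
(i.e. they are in the same connected component of the subgraph induced by `A`). -/
def ReachIn (T : SimpleGraph V) (A : Set V) (x y : V) : Prop :=
  ∃ p : T.Walk x y, ∀ z ∈ p.support, z ∈ A

/-- The connected component of `v` in the subgraph of `T` induced by `A`. -/
def compIn (T : SimpleGraph V) (A : Set V) (v : V) : Set V :=
  {u | ReachIn T A v u}

/-- `A` induces a connected (possibly empty) subgraph of `T`, i.e. a subtree of `T`. -/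
def IsSubtreeOn (T : SimpleGraph V) (A : Set V) : Prop :=
  ∀ a ∈ A, ∀ b ∈ A, ReachIn T A a b

/-- `C` is a connected component of the subgraph of `T` induced by `A`. -/
def IsCompOf (T : SimpleGraph V) (A C : Set V) : Prop :=
  ∃ v ∈ A, C = compIn T A v


/-!
If the `v`-BCE `(v, u₀)` with `u₀ ∈ V(T̂)` does not lie in the `(c, y)`-tree, then the tree path
from `y` to `u₀` enters `T̂` at `z` and must pass through `c`, so
`d_T(u₀, y) = d_T(u₀, c) + d_T(c, y)`. Together with the triangle inequality for `d_T(u, y)` and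
the choice of `f` this gives `φ(f, g) ≤ φ(f₀, g)` for `f₀ = (v, u₀)`, hence
`φ_e(f) = φ(f, g) ≤ φ_e(f₀)`, so `f` would be a `v`-BCE itself.
-/

section

omit [Fintype V] [DecidableEq V]

variable {G T : SimpleGraph V} {w : Sym2 V → ℝ}

lemma pathWeight_append {a b c : V} (p : G.Walk a b) (q : G.Walk b c) :
    pathWeight w (p.append q) = pathWeight w p + pathWeight w q := by
  simp [pathWeight, Walk.edges_append]

lemma pathWeight_reverse {a b : V} (p : G.Walk a b) : pathWeight w p.reverse = pathWeight w p := by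
  simp [pathWeight, Walk.edges_reverse, List.map_reverse, List.sum_reverse]

lemma pathWeight_nonneg (hw : ∀ a ∈ G.edgeSet, 0 ≤ w a) {a b : V} (p : G.Walk a b) :
    0 ≤ pathWeight w p :=
  List.sum_nonneg <| by simpa using fun a ha => hw a (p.edges_subset_edgeSet ha)

lemma wDist_comm (G : SimpleGraph V) (w : Sym2 V → ℝ) (a b : V) :
    wDist G w a b = wDist G w b a := by
  have key : ∀ a b : V, {r | ∃ p : G.Walk a b, p.IsPath ∧ r = pathWeight w p} ⊆
      {r | ∃ p : G.Walk b a, p.IsPath ∧ r = pathWeight w p} := by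
    rintro a b _ ⟨p, hp, rfl⟩
    exact ⟨p.reverse, hp.reverse, (pathWeight_reverse p).symm⟩
  rw [wDist, wDist, (key a b).antisymm (key b a)]

lemma SimpleGraph.IsTree.wDist_eq_pathWeight (hT : T.IsTree) {a b : V} {p : T.Walk a b}
    (hp : p.IsPath) : wDist T w a b = pathWeight w p := by
  have hpaths : {r | ∃ q : T.Walk a b, q.IsPath ∧ r = pathWeight w q} = {pathWeight w p} := by
    ext r
    constructor
    · rintro ⟨q, hq, rfl⟩
      rw [(hT.existsUnique_path a b).unique hq hp, Set.mem_singleton_iff]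
    · rintro rfl
      exact ⟨p, hp, rfl⟩
  rw [wDist, hpaths, csInf_singleton]

lemma SimpleGraph.Walk.IsPath.append_of_support_inter {a b c : V} {p : G.Walk a b}
    {q : G.Walk b c} (hp : p.IsPath) (hq : q.IsPath)
    (hpq : ∀ x ∈ p.support, x ∈ q.support → x = b) : (p.append q).IsPath := by
  refine Walk.IsPath.mk' ?_
  rw [Walk.support_append, List.nodup_append]
  refine ⟨hp.support_nodup, hq.support_nodup.tail, fun x hxp x' hxq hxx' => ?_⟩
  subst hxx'
  have hb : b ∉ q.support.tail := by
    have hnd := hq.support_nodup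
    rw [← q.cons_tail_support] at hnd
    exact (List.nodup_cons.1 hnd).1
  exact hb (hpq x hxp (List.mem_of_mem_tail hxq) ▸ hxq)

variable {root : V} {e : Sym2 V} {v u x y : V}

lemma phi_le_phi_of_le {u' : V} (hwg : 0 ≤ w s(x, y))
    (h : w s(v, u) + wDist T w u y ≤ w s(v, u') + wDist T w u' y) :
    phi T w v u x y ≤ phi T w v u' x y :=
  div_le_div_of_nonneg_right (by linarith) hwg

lemma phiMax_eq_phi_of_critical (hg : VSwap G T root e x y)
    (hcrit : ∀ x' y', VSwap G T root e x' y' → phi T w v u x' y' ≤ phi T w v u x y) :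
    phiMax G T w root e v u = phi T w v u x y :=
  IsGreatest.csSup_eq ⟨⟨x, y, hg, rfl⟩, by rintro _ ⟨x', y', hg', rfl⟩; exact hcrit x' y' hg'⟩

end

section

omit [Fintype V]

variable {G T : SimpleGraph V} {w : Sym2 V → ℝ}

lemma pathWeight_bypass_le (hw : ∀ a ∈ G.edgeSet, 0 ≤ w a) {a b : V} (p : G.Walk a b) :
    pathWeight w p.bypass ≤ pathWeight w p := by
  obtain ⟨l, hperm, hsub⟩ :=
    List.subperm_of_subset p.bypass_isPath.isTrail.edges_nodup p.edges_bypass_subset_edges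
  rw [pathWeight, pathWeight, ← (hperm.map w).sum_eq]
  exact (hsub.map w).sum_le_sum <| by simpa using fun a ha => hw a (p.edges_subset_edgeSet ha)

lemma wDist_le_pathWeight (hw : ∀ a ∈ G.edgeSet, 0 ≤ w a) {a b : V} (p : G.Walk a b) :
    wDist G w a b ≤ pathWeight w p := by
  have hbdd : BddBelow {r | ∃ q : G.Walk a b, q.IsPath ∧ r = pathWeight w q} := by
    refine ⟨0, ?_⟩
    rintro _ ⟨q, -, rfl⟩
    exact pathWeight_nonneg hw q
  exact (csInf_le hbdd ⟨p.bypass, p.bypass_isPath, rfl⟩).trans (pathWeight_bypass_le hw p)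

namespace SimpleGraph.IsTree

lemma wDist_triangle (hT : T.IsTree) (hw : ∀ a ∈ T.edgeSet, 0 ≤ w a) (a b c : V) :
    wDist T w a c ≤ wDist T w a b + wDist T w b c := by
  obtain ⟨p⟩ := hT.connected.preconnected a b
  obtain ⟨q⟩ := hT.connected.preconnected b c
  rw [hT.wDist_eq_pathWeight p.bypass_isPath, hT.wDist_eq_pathWeight q.bypass_isPath,
    ← pathWeight_append]
  exact wDist_le_pathWeight hw _

lemma wDist_eq_add_of_mem_support (hT : T.IsTree) {a b c : V} {p : T.Walk a b}
    (hp : p.IsPath) (hc : c ∈ p.support) : wDist T w a b = wDist T w a c + wDist T w c b := by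
  rw [hT.wDist_eq_pathWeight (hp.takeUntil hc), hT.wDist_eq_pathWeight (hp.dropUntil hc),
    ← pathWeight_append, p.take_spec hc, hT.wDist_eq_pathWeight hp]

lemma wDist_eq_add_of_notMem_compIn (hT : T.IsTree) {A : Set V} (hA : IsSubtreeOn T A)
    {c y z u₀ : V} (hzA : z ∈ A) (hu₀A : u₀ ∈ A) (hout : u₀ ∉ compIn T (A \ {c}) z)
    {q : T.Walk y z} (hq : q.IsPath) (hfirst : ∀ a ∈ q.support, a ∈ A → a = z) :
    wDist T w y u₀ = wDist T w y c + wDist T w c u₀ := by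
  obtain ⟨s₀, hs₀A⟩ := hA z hzA u₀ hu₀A
  have hsA : ∀ a ∈ s₀.bypass.support, a ∈ A := fun a ha =>
    hs₀A a (s₀.support_bypass_subset_support ha)
  have hcs : c ∈ s₀.bypass.support := by
    by_contra hcs
    exact hout ⟨s₀.bypass, fun a ha => ⟨hsA a ha, fun hac => hcs (hac ▸ ha)⟩⟩
  have hpath : (q.append s₀.bypass).IsPath :=
    hq.append_of_support_inter s₀.bypass_isPath fun a ha has => hfirst a ha (hsA a has)
  exact hT.wDist_eq_add_of_mem_support hpath ((Walk.mem_support_append_iff _ _).2 (Or.inr hcs))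

end SimpleGraph.IsTree

end

omit [DecidableEq V] in
lemma phi_le_phiMax {G T : SimpleGraph V} {w : Sym2 V → ℝ} {root : V} {e : Sym2 V}
    {v u x y : V} (hg : VSwap G T root e x y) :
    phi T w v u x y ≤ phiMax G T w root e v u := by
  refine le_csSup ((Set.finite_range fun p : V × V => phi T w v u p.1 p.2).subset ?_).bddAbove
    ⟨x, y, hg, rfl⟩
  rintro _ ⟨x', y', -, rfl⟩
  exact ⟨(x', y'), rfl⟩

/-- `A = V(T̂)`, and the `(c, y)`-tree of `T̂` is represented by its vertex set
`compIn T (A \ {c}) z`, which is empty when `z = c`. -/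
theorem stmt_1_general (G T : SimpleGraph V) (w : Sym2 V → ℝ) (root : V)
    (hw : ∀ a ∈ G.edgeSet, 0 < w a)
    (hTG : T ≤ G) (hT : T.IsTree)
    (e : Sym2 V)
    (v : V)
    (A : Set V) (hA : IsSubtreeOn T A)
    (c : V)
    -- `f = (v, u) ∈ S(e, v)` minimizes `w(f') + d_T(u', c)` over `f' = (v, u') ∈ S(e, v)`
    (u : V)
    (hfmin : ∀ u', VSwap G T root e v u' →
      w (s(v, u)) + wDist T w u c ≤ w (s(v, u')) + wDist T w u' c)
    -- `g = (x, y)` is a critical edge for `f`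
    (x y : V) (hg : VSwap G T root e x y)
    (hcrit : ∀ x' y', VSwap G T root e x' y' → phi T w v u x' y' ≤ phi T w v u x y)
    -- `S(e, v, V(T̂))` contains a `v`-BCE for `e`
    (hBCEin : ∃ u₀, VSwap G T root e v u₀ ∧ u₀ ∈ A ∧
      ∀ u', VSwap G T root e v u' → phiMax G T w root e v u₀ ≤ phiMax G T w root e v u')
    -- `f` is not a `v`-BCE for `e`
    (hnotBCE : ¬ (∀ u', VSwap G T root e v u' →
      phiMax G T w root e v u ≤ phiMax G T w root e v u'))
    -- `z` is the first vertex of the unique path of `T` from `y` to `c` belonging to `A`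
    (z : V) (q : T.Walk y z) (r : T.Walk z c)
    (hqr : (q.append r).IsPath) (hzA : z ∈ A)
    (hfirst : ∀ a ∈ q.support, a ∈ A → a = z) :
    -- then `S(e, v, V(T'))` contains a `v`-BCE, `T'` being the `(c, y)`-tree of `T̂`
    ∃ u₀, VSwap G T root e v u₀ ∧ u₀ ∈ compIn T (A \ {c}) z ∧
      ∀ u', VSwap G T root e v u' → phiMax G T w root e v u₀ ≤ phiMax G T w root e v u' := by
  obtain ⟨u₀, hu₀, hu₀A, hbest⟩ := hBCEin
  by_cases hin : u₀ ∈ compIn T (A \ {c}) z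
  · exact ⟨u₀, hu₀, hin, hbest⟩
  refine absurd (fun u' hu' => ?_) hnotBCE
  have hwT : ∀ a ∈ T.edgeSet, 0 ≤ w a := fun a ha => (hw a (edgeSet_mono hTG ha)).le
  have hthrough : wDist T w y u₀ = wDist T w y c + wDist T w c u₀ :=
    hT.wDist_eq_add_of_notMem_compIn hA hzA hu₀A hin hqr.of_append_left hfirst
  have hcloser : w s(v, u) + wDist T w u y ≤ w s(v, u₀) + wDist T w u₀ y := by
    rw [wDist_comm T w u₀ y, hthrough, wDist_comm T w y c, wDist_comm T w c u₀]
    linarith [hT.wDist_triangle hwT u c y, hfmin u₀ hu₀]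
  calc phiMax G T w root e v u = phi T w v u x y := phiMax_eq_phi_of_critical hg hcrit
    _ ≤ phi T w v u₀ x y := phi_le_phi_of_le (hw _ hg.1).le hcloser
    _ ≤ phiMax G T w root e v u₀ := phi_le_phiMax hg
    _ ≤ phiMax G T w root e v u' := hbest u' hu'

/-- localizing a `v`-best cut edge (Lemma on the position of a BCE).
`A = V(T̂)` is the vertex set of a subtree `T̂` of `T` with `V(T̂) ⊆ D_e`, `c ∈ V(T̂)`;
`f = (v, u)` minimizes `w(f') + d_T(u', c)` over `f' = (v, u') ∈ S(e, v)`;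
`g = (x, y)` is a critical edge for `f`; the walk `q.append r` is the unique path of
`T` from `y` to `c` and `z` is its first vertex belonging to `A`, so that the
`(c, y)`-tree of `T̂` has vertex set `compIn T (A \ {c}) z` (empty when `z = c`). -/
theorem stmt_1 (G T : SimpleGraph V) (w : Sym2 V → ℝ) (root : V)
    (hw : ∀ a ∈ G.edgeSet, 0 < w a)
    (h2ec : TwoEdgeConnected G)
    (hTG : T ≤ G) (hT : T.IsTree)
    (e : Sym2 V) (he : e ∈ T.edgeSet)
    (v : V) (hv : v ∈ Ue T root e)
    (A : Set V) (hA : IsSubtreeOn T A) (hAD : A ⊆ De T root e)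
    (c : V) (hcA : c ∈ A)
    -- `f = (v, u) ∈ S(e, v)` minimizes `w(f') + d_T(u', c)` over `f' = (v, u') ∈ S(e, v)`
    (u : V) (hu : VSwap G T root e v u)
    (hfmin : ∀ u', VSwap G T root e v u' →
      w (s(v, u)) + wDist T w u c ≤ w (s(v, u')) + wDist T w u' c)
    -- `g = (x, y)` is a critical edge for `f`
    (x y : V) (hg : VSwap G T root e x y)
    (hcrit : ∀ x' y', VSwap G T root e x' y' → phi T w v u x' y' ≤ phi T w v u x y)
    -- `S(e, v, V(T̂))` contains a `v`-BCE for `e`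
    (hBCEin : ∃ u₀, VSwap G T root e v u₀ ∧ u₀ ∈ A ∧
      ∀ u', VSwap G T root e v u' → phiMax G T w root e v u₀ ≤ phiMax G T w root e v u')
    -- `f` is not a `v`-BCE for `e`
    (hnotBCE : ¬ (∀ u', VSwap G T root e v u' →
      phiMax G T w root e v u ≤ phiMax G T w root e v u'))
    -- `z` is the first vertex of the unique path of `T` from `y` to `c` belonging to `A`
    (z : V) (q : T.Walk y z) (r : T.Walk z c)
    (hqr : (q.append r).IsPath) (hzA : z ∈ A)
    (hfirst : ∀ a ∈ q.support, a ∈ A → a = z) :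
    -- then `S(e, v, V(T'))` contains a `v`-BCE, `T'` being the `(c, y)`-tree of `T̂`
    ∃ u₀, VSwap G T root e v u₀ ∧ u₀ ∈ compIn T (A \ {c}) z ∧
      ∀ u', VSwap G T root e v u' → phiMax G T w root e v u₀ ≤ phiMax G T w root e v u' :=
  stmt_1_general G T w root hw hTG hT e v A hA c u hfmin x y hg hcrit hBCEin hnotBCE z q r hqr hzA
    hfirst
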